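/- #{σ ∈ C_n : Θ_n(σ) = ∅} = Σ_{h=0}^{n-1} (-1)^h · C(n,h) · (n-h-1)! + (-1)^n, where C_n is the set of n-cycles in S_n and Θ_n(σ) = {k ∈ [n] : σ(k) = k+1 mod n}. -/

import Mathlib

/-- The successor `k+1 mod n`, taking values in `Fin n`. -/
def cyclicSucc {n : ℕ} (j : Fin n) : Fin n := ⟨((j : ℕ) + 1) % n, Nat.mod_lt _ j.pos⟩

/-- `σ` consists of a single cycle through all of `Fin n` (an `n`-cycle). -/
def IsFullCycle {n : ℕ} (σ : Equiv.Perm (Fin n)) : Prop :=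
  ∀ x y : Fin n, ∃ i : ℕ, (σ ^ i) x = y

/-!
Let `τ` be the rotation `k ↦ k + 1` of `Fin n`. By inclusion–exclusion over the set of points
where an `n`-cycle `σ` agrees with `τ`, it suffices to know that exactly `(n - |S| - 1)!` of the
`n`-cycles agree with `τ` on a given `S`. This is proved by cutting a point `b` out of the cycle
(`removePoint`), which maps the `n`-cycles bijectively onto the pairs
(predecessor of `b`, `(n-1)`-cycle on the remaining points). For `S = ∅` this gives `(n-1)!`
cycles by induction. Otherwise pick `a ∈ S` with `τ a ∉ S` and cut out `b = τ a`: the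
predecessor of `b` is then forced to be `a`, and the constraints on `S \ {a}` become the same
kind of constraints for the cycle `τ` with `b` cut out.
-/

open Finset
open scoped Nat

theorem Nat.card_subtype_ne {α : Type*} [Finite α] (b : α) :
    Nat.card {x // x ≠ b} = Nat.card α - 1 := by
  classical
  rw [← Nat.card_congr (Equiv.optionSubtypeNe b), Finite.card_option, Nat.add_sub_cancel]

namespace Equiv.Perm

variable {α : Type*}

theorem isCycleOn_univ_iff {σ : Perm α} : σ.IsCycleOn .univ ↔ ∀ x y, σ.SameCycle x y := by
  simp [IsCycleOn, σ.bijective]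

theorem IsCycleOn.mem_of_mapsTo [Finite α] {τ : Perm α} (hτ : τ.IsCycleOn .univ) {s : Set α}
    (hs : Set.MapsTo τ s s) {a : α} (ha : a ∈ s) (x : α) : x ∈ s := by
  obtain ⟨i, rfl⟩ := (isCycleOn_univ_iff.1 hτ a x).exists_nat_pow_eq
  rw [coe_pow]
  exact hs.iterate i ha

section RemovePoint

variable [DecidableEq α]

/-- Cuts `b` out of the cycle of `σ`: the predecessor of `b` is sent to `σ b`. -/
def removePoint (b : α) (σ : Perm α) : Perm {x // x ≠ b} :=
  (swap b (σ b) * σ).subtypePerm fun _ =>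
    (swap b (σ b) * σ).injective.ne_iff' (by simp [mul_apply])

variable {b : α}

theorem removePoint_apply_of_ne {σ : Perm α} {x : {x // x ≠ b}} (h : σ x ≠ b) :
    (removePoint b σ x : α) = σ x :=
  swap_apply_of_ne_of_ne h fun h' => x.2 (σ.injective h')

theorem removePoint_apply_of_eq {σ : Perm α} {x : {x // x ≠ b}} (h : σ x = b) :
    (removePoint b σ x : α) = σ b := by
  simp [removePoint, h]

theorem removePoint_apply_eq_removePoint_apply {σ τ : Perm α} {c : {x // x ≠ b}}
    (h : σ c = τ c) (hc : τ c ≠ b) : removePoint b σ c = removePoint b τ c :=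
  Subtype.ext <| by rw [removePoint_apply_of_ne (h ▸ hc), removePoint_apply_of_ne hc, h]

def insertAfter (b : α) (σ : Perm {x // x ≠ b}) (p : {x // x ≠ b}) : Perm α :=
  swap b (σ p) * ofSubtype σ

variable {σ : Perm {x // x ≠ b}} {p : {x // x ≠ b}}

@[simp]
theorem insertAfter_apply_self : insertAfter b σ p p = b := by
  simp [insertAfter, ofSubtype_apply_of_mem σ p.2]

@[simp]
theorem insertAfter_apply_point : insertAfter b σ p b = σ p := by
  simp [insertAfter, ofSubtype_apply_of_not_mem σ (not_not.2 rfl)]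

theorem insertAfter_apply_of_ne {x : {x // x ≠ b}} (hx : x ≠ p) :
    insertAfter b σ p x = σ x := by
  rw [insertAfter, mul_apply, ofSubtype_apply_of_mem σ x.2]
  exact swap_apply_of_ne_of_ne (σ x).2 fun h => hx (σ.injective (Subtype.ext h))

@[simp]
theorem removePoint_insertAfter : removePoint b (insertAfter b σ p) = σ := by
  ext x
  by_cases hx : x = p
  · subst hx
    rw [removePoint_apply_of_eq insertAfter_apply_self, insertAfter_apply_point]
  · rw [removePoint_apply_of_ne (by rw [insertAfter_apply_of_ne hx]; exact (σ x).2),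
      insertAfter_apply_of_ne hx]

theorem insertAfter_removePoint {τ : Perm α} (hp : τ p = b) :
    insertAfter b (removePoint b τ) p = τ := by
  ext x
  by_cases hxb : x = b
  · subst hxb
    rw [insertAfter_apply_point, removePoint_apply_of_eq hp]
  by_cases hxp : x = p
  · subst hxp
    rw [insertAfter_apply_self, hp]
  · have hne : (⟨x, hxb⟩ : {x // x ≠ b}) ≠ p := fun h => hxp (congrArg Subtype.val h)
    rw [show x = ((⟨x, hxb⟩ : {x // x ≠ b}) : α) from rfl, insertAfter_apply_of_ne hne,
      removePoint_apply_of_ne fun h => hxp (τ.injective (h.trans hp.symm))]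

theorem IsCycleOn.removePoint [Finite α] {τ : Perm α} (hτ : τ.IsCycleOn .univ)
    (hb : τ b ≠ b) : (Perm.removePoint b τ).IsCycleOn .univ := by
  -- `g` merges `b` with its successor; along a `τ`-orbit, `g` moves by one step of
  -- `removePoint b τ` or stays put.
  let g : α → {x // x ≠ b} := fun z => if h : z = b then ⟨τ b, hb⟩ else ⟨z, h⟩
  have step : ∀ z, g (τ z) = Perm.removePoint b τ (g z) ∨ g (τ z) = g z := by
    intro z
    by_cases hz : z = b
    · subst hz
      simp [g, hb]
    · left
      ext
      by_cases hτz : τ z = b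
      · simp [g, hz, hτz, Perm.removePoint_apply_of_eq (x := ⟨z, hz⟩) hτz]
      · simp [g, hz, hτz, Perm.removePoint_apply_of_ne (x := ⟨z, hz⟩) hτz]
  have reach : ∀ (x : {x // x ≠ b}) i,
      (Perm.removePoint b τ).SameCycle x (g ((τ ^ i) x)) := by
    intro x i
    induction i with
    | zero => simpa [g, x.2] using SameCycle.refl _ x
    | succ i ih =>
      rw [pow_succ', mul_apply]
      rcases step ((τ ^ i) x) with h | h <;> rw [h]
      exacts [sameCycle_apply_right.2 ih, ih]
  refine isCycleOn_univ_iff.2 fun x y => ?_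
  obtain ⟨i, hi⟩ := (isCycleOn_univ_iff.1 hτ x y).exists_nat_pow_eq
  simpa [g, hi, y.2] using reach x i

theorem IsCycleOn.insertAfter [Finite α] (hσ : σ.IsCycleOn .univ) :
    (Perm.insertAfter b σ p).IsCycleOn .univ := by
  set ι := Perm.insertAfter b σ p
  have hp : ι p = b := insertAfter_apply_self
  have hb : ι b = σ p := insertAfter_apply_point
  have step : ∀ z : {x // x ≠ b}, ι.SameCycle z (σ z) := by
    intro z
    by_cases hz : z = p
    · have h := sameCycle_apply_right.2 (sameCycle_apply_right.2 (SameCycle.refl ι p))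
      rwa [hp, hb, ← hz] at h
    · rw [← insertAfter_apply_of_ne hz]
      exact sameCycle_apply_right.2 .rfl
  have reach : ∀ (x : {x // x ≠ b}) i, ι.SameCycle x ((σ ^ i) x) := by
    intro x i
    induction i with
    | zero => rfl
    | succ i ih => exact ih.trans (by rw [pow_succ', mul_apply]; exact step _)
  have toSubtype : ∀ u : α, ∃ z : {x // x ≠ b}, ι.SameCycle u z := by
    intro u
    by_cases hu : u = b
    · have h : ι.SameCycle p (ι p) := sameCycle_apply_right.2 .rfl
      rw [hp] at h
      exact ⟨p, hu ▸ h.symm⟩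
    · exact ⟨⟨u, hu⟩, .rfl⟩
  refine isCycleOn_univ_iff.2 fun u v => ?_
  obtain ⟨x, hx⟩ := toSubtype u
  obtain ⟨y, hy⟩ := toSubtype v
  obtain ⟨i, rfl⟩ := (isCycleOn_univ_iff.1 hσ x y).exists_nat_pow_eq
  exact hx.trans ((reach x i).trans hy.symm)

def removePointEquiv [Finite α] [Nontrivial α] (b : α) :
    {σ : Perm α // σ.IsCycleOn .univ} ≃
      {x // x ≠ b} × {σ : Perm {x // x ≠ b} // σ.IsCycleOn .univ} where
  toFun σ :=
    have hb : σ.1 b ≠ b := σ.2.apply_ne Set.nontrivial_univ trivial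
    (⟨σ.1⁻¹ b, fun h => hb (inv_eq_iff_eq.1 h).symm⟩,
      ⟨removePoint b σ, σ.2.removePoint hb⟩)
  invFun q := ⟨insertAfter b q.2.1 q.1, q.2.2.insertAfter⟩
  left_inv σ := Subtype.ext (insertAfter_removePoint (σ.1.apply_symm_apply b))
  right_inv _ := Prod.ext (Subtype.ext (inv_eq_iff_eq.2 insertAfter_apply_self.symm))
    (Subtype.ext removePoint_insertAfter)

def removePointAgreeEquiv [Finite α] {τ : Perm α} {S : Finset α} {a : α} (ha : a ∈ S)
    (hbS : τ a ∉ S) :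
    {σ : Perm α // σ.IsCycleOn .univ ∧ ∀ c ∈ S, σ c = τ c} ≃
      {σ : Perm {x // x ≠ τ a} // σ.IsCycleOn .univ ∧
        ∀ c ∈ (S.erase a).subtype (· ≠ τ a), σ c = removePoint (τ a) τ c} where
  toFun σ :=
    have hσ : σ.1 (τ a) ≠ τ a := fun h =>
      ne_of_mem_of_not_mem ha hbS (σ.1.injective ((σ.2.2 a ha).trans h.symm))
    ⟨removePoint (τ a) σ, σ.2.1.removePoint hσ, fun c hc =>
      have hc := mem_subtype.1 hc
      removePoint_apply_eq_removePoint_apply (σ.2.2 c (mem_of_mem_erase hc))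
        fun h => ne_of_mem_erase hc (τ.injective h)⟩
  invFun σ := ⟨insertAfter (τ a) σ.1 ⟨a, ne_of_mem_of_not_mem ha hbS⟩, σ.2.1.insertAfter,
    fun c hc => by
      by_cases hca : c = a
      · subst hca
        exact insertAfter_apply_self
      · have hcb : c ≠ τ a := ne_of_mem_of_not_mem hc hbS
        have hτc : τ c ≠ τ a := fun h => hca (τ.injective h)
        rw [show c = ((⟨c, hcb⟩ : {x // x ≠ τ a}) : α) from rfl,
          insertAfter_apply_of_ne fun h => hca (congrArg Subtype.val h),
          σ.2.2 _ (mem_subtype.2 (mem_erase.2 ⟨hca, hc⟩)), removePoint_apply_of_ne hτc]⟩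
  left_inv σ := Subtype.ext (insertAfter_removePoint (σ.2.2 a ha))
  right_inv σ := Subtype.ext removePoint_insertAfter

end RemovePoint

theorem card_isCycleOn_univ (α : Type*) [Finite α] :
    Nat.card {σ : Perm α // σ.IsCycleOn .univ} = (Nat.card α - 1)! := by
  classical
  induction α using Finite.induction_subsingleton_or_nontrivial with
  | hbase α =>
    have hα : Nat.card α ≤ 1 := Finite.card_le_one_iff_subsingleton.2 ‹_›
    rw [Nat.card_congr (Equiv.subtypeUnivEquiv (isCycleOn_of_subsingleton · _)), Nat.card_perm]
    interval_cases Nat.card α <;> rfl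
  | hstep α ih =>
    obtain ⟨b⟩ := ‹Nontrivial α›.to_nonempty
    have hα := Finite.one_lt_card (α := α)
    rw [Nat.card_congr (removePointEquiv b), Nat.card_prod,
      ih {x // x ≠ b} (by rw [Nat.card_subtype_ne]; omega), Nat.card_subtype_ne]
    exact Nat.mul_factorial_pred (by omega)

/-- For `S = univ` the value `(Nat.card α - #S - 1)! = 0! = 1` comes from truncated subtraction;
`τ` itself is then the only such cycle. -/
theorem card_isCycleOn_univ_forall_mem_eq [Finite α] {τ : Perm α} (hτ : τ.IsCycleOn .univ)
    (S : Finset α) :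
    Nat.card {σ : Perm α // σ.IsCycleOn .univ ∧ ∀ a ∈ S, σ a = τ a} =
      (Nat.card α - #S - 1)! := by
  classical
  induction hS : #S generalizing α with
  | zero =>
    simp only [card_eq_zero.1 hS, notMem_empty, false_imp_iff, implies_true, and_true]
    exact card_isCycleOn_univ α
  | succ k ih =>
    by_cases h : ∃ a ∈ S, τ a ∉ S
    · obtain ⟨a, ha, hbS⟩ := h
      have hτb : τ (τ a) ≠ τ a :=
        hτ.apply_ne ⟨a, trivial, τ a, trivial, ne_of_mem_of_not_mem ha hbS⟩ trivial
      have hS' : #((S.erase a).subtype (· ≠ τ a)) = k := by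
        rw [card_subtype, filter_true_of_mem fun x hx =>
          ne_of_mem_of_not_mem (mem_of_mem_erase hx) hbS, card_erase_of_mem ha, hS]
        rfl
      rw [Nat.card_congr (removePointAgreeEquiv ha hbS), ih (hτ.removePoint hτb) _ hS',
        Nat.card_subtype_ne]
      congr 1
      omega
    · push Not at h
      obtain ⟨a, ha⟩ := card_pos.1 (by omega : 0 < #S)
      have hall : ∀ x, x ∈ S := hτ.mem_of_mapsTo h ha
      have hcard : Nat.card α = #S := by
        rw [← Nat.card_eq_finsetCard]
        exact Nat.card_congr (Equiv.subtypeUnivEquiv hall).symm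
      rw [hcard, hS, Nat.sub_self, Nat.zero_sub, Nat.factorial_zero, Nat.card_eq_one_iff_exists]
      exact ⟨⟨τ, hτ, fun _ _ => rfl⟩,
        fun σ => Subtype.ext (Equiv.ext fun x => σ.2.2 x (hall x))⟩

theorem card_isCycleOn_univ_forall_ne [Fintype α] {τ : Perm α}
    (hτ : τ.IsCycleOn .univ) :
    (Nat.card {σ : Perm α // σ.IsCycleOn .univ ∧ ∀ a, σ a ≠ τ a} : ℤ) =
      ∑ m ∈ range (Fintype.card α + 1),
        (-1 : ℤ) ^ m * (Fintype.card α).choose m * (Fintype.card α - m - 1)! := by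
  classical
  have hagree (t : Finset α) :
      ∑ σ ∈ t.inf fun a => ({σ | σ a = τ a} : Finset (Perm α)),
        (if σ.IsCycleOn .univ then 1 else 0 : ℤ) = (Fintype.card α - #t - 1)! := by
    rw [sum_boole, ← Nat.card_eq_fintype_card, ← card_isCycleOn_univ_forall_mem_eq hτ t,
      Nat.card_eq_fintype_card, Fintype.card_subtype]
    congr 2
    ext σ
    simp [mem_inf, and_comm]
  calc (Nat.card {σ : Perm α // σ.IsCycleOn .univ ∧ ∀ a, σ a ≠ τ a} : ℤ)
      = ∑ σ ∈ univ.inf fun a => ({σ | σ a = τ a} : Finset (Perm α))ᶜ,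
          (if σ.IsCycleOn .univ then 1 else 0 : ℤ) := by
        rw [sum_boole, Nat.card_eq_fintype_card, Fintype.card_subtype]
        congr 2
        ext σ
        simp [mem_inf, and_comm]
    _ = ∑ t ∈ univ.powerset, (-1 : ℤ) ^ #t • ((Fintype.card α - #t - 1)! : ℤ) := by
        rw [inclusion_exclusion_sum_inf_compl]
        exact sum_congr rfl fun t _ => by rw [hagree]
    _ = _ := by
        rw [sum_powerset_apply_card fun m => (-1 : ℤ) ^ m • ((Fintype.card α - m - 1)! : ℤ),
          Finset.card_univ]
        refine sum_congr rfl fun m _ => ?_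
        simp only [nsmul_eq_mul, smul_eq_mul]
        ring

end Equiv.Perm

open Equiv.Perm

theorem isFullCycle_iff_isCycleOn_univ {n : ℕ} {σ : Equiv.Perm (Fin n)} :
    IsFullCycle σ ↔ σ.IsCycleOn .univ := by
  rw [isCycleOn_univ_iff]
  exact forall₂_congr fun x y =>
    ⟨fun ⟨i, hi⟩ => ⟨i, by rwa [zpow_natCast]⟩, SameCycle.exists_nat_pow_eq⟩

theorem cyclicSucc_eq_finRotate {n : ℕ} (k : Fin n) : cyclicSucc k = finRotate n k := by
  rw [finRotate_apply]
  ext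
  simp [cyclicSucc, Fin.val_add]

theorem isCycleOn_finRotate (n : ℕ) : (finRotate n).IsCycleOn .univ := by
  rcases le_or_gt n 1 with hn | hn
  · have : Subsingleton (Fin n) := Fin.subsingleton_iff_le_one.2 hn
    exact isCycleOn_of_subsingleton _ _
  · have h := (isCycle_finRotate_of_le hn).isCycleOn
    rwa [← coe_support_eq_set_support, support_finRotate_of_le hn, coe_univ] at h

/-- `#{σ ∈ C_n : Θ_n(σ) = ∅} = Σ_{h=0}^{n-1} (-1)^h·C(n,h)·(n-h-1)! + (-1)^n`, where
`C_n` is the set of `n`-cycles in `S_n` and `Θ_n(σ) = {k ∈ [n] : σ(k) = k+1 mod n}`. -/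
theorem stmt16 (n : ℕ) :
    (Set.ncard {σ : Equiv.Perm (Fin n) | IsFullCycle σ ∧
        ∀ k : Fin n, σ k ≠ cyclicSucc k} : ℤ)
    =
    (∑ h ∈ Finset.range n, (-1 : ℤ) ^ h * (n.choose h : ℤ) * (Nat.factorial (n - h - 1) : ℤ))
      + (-1 : ℤ) ^ n := by
  simp only [isFullCycle_iff_isCycleOn_univ, cyclicSucc_eq_finRotate]
  rw [← Nat.card_coe_set_eq, Set.coe_ofPred,
    card_isCycleOn_univ_forall_ne (isCycleOn_finRotate n), Fintype.card_fin, sum_range_succ]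
  simp
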